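/- Let ε ∈ (0,1), p̂ ∈ (0,1) with p̂/(1−ε) < 1, and M ≥ 1 a natural number. For every δ' with 0 ≤ δ' < (1 − p̂/(1−ε))^M, there exist a finite nonempty type Q and a probability mass function P on Q whose MAP probability p* := max_{q∈Q} P(q) satisfies p* > p̂/(1−ε), whose ε-superlevel set G_ε := {q : P(q) ≥ p*(1−ε)} is a singleton, and such that the probability under the product measure P^⊗M that no coordinate lies in G_ε — equivalently, that the sample maximum falls below p*(1−ε) — exceeds δ'. Hence no confidence level strictly below (1 − p̂/(1−ε))^M is valid uniformly over all distributions having an atom of mass exceeding p̂/(1−ε). -/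

import Mathlib

open Finset

/-- The probability of event `E` under `m` i.i.d. draws from the pmf `p`
on a finite type `Q` (i.e., the `m`-fold product measure of `p`). -/
noncomputable def iidProb {Q : Type*} [Fintype Q] (p : Q → ℝ) (m : ℕ)
    (E : Set (Fin m → Q)) : ℝ :=
  ∑ x : Fin m → Q, E.indicator (fun y => ∏ i, p (y i)) x

/-!
The witness is a "spike": one atom of mass `p*` and `k` atoms sharing the remaining mass
`1 - p*`, with `k` so large that each small atom lies below the threshold `p* (1 - ε)`.
Then the superlevel set is the spike alone, a sample misses it with probability
`(1 - p*)^M`, and by continuity of `x ↦ (1 - x)^M` one can take `p*` just above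
`p̂ / (1 - ε)` and still have `(1 - p*)^M > δ'`.
-/

section iidProb

variable {Q : Type*} [Fintype Q]

theorem iidProb_forall_mem (p : Q → ℝ) (m : ℕ) (S : Set Q) :
    iidProb p m {x | ∀ i, x i ∈ S} = (∑ q, S.indicator p q) ^ m := by
  classical
  rw [iidProb, sum_pow', Fintype.piFinset_univ]
  refine sum_congr rfl fun x _ => ?_
  by_cases hx : ∀ i, x i ∈ S
  · rw [Set.indicator_of_mem (show x ∈ {x | ∀ i, x i ∈ S} from hx)]
    exact prod_congr rfl fun i _ => (Set.indicator_of_mem (hx i) p).symm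
  · rw [Set.indicator_of_notMem (show x ∉ {x | ∀ i, x i ∈ S} from hx)]
    obtain ⟨i, hi⟩ := not_forall.1 hx
    exact (prod_eq_zero (mem_univ i) (Set.indicator_of_notMem hi p)).symm

theorem iidProb_forall_ne {p : Q → ℝ} (hp : ∑ q, p q = 1) (m : ℕ) (q₀ : Q) :
    iidProb p m {x | ∀ i, x i ≠ q₀} = (1 - p q₀) ^ m := by
  classical
  have hmiss : ∑ q, ({q₀}ᶜ : Set Q).indicator p q = 1 - p q₀ := by
    rw [← hp, Set.indicator_compl]
    simp [sum_sub_distrib]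
  exact (iidProb_forall_mem p m {q₀}ᶜ).trans (by rw [hmiss])

end iidProb

open Filter Topology in
theorem exists_gt_lt_one_sub_pow {a δ : ℝ} {m : ℕ} (ha : a < 1) (hδ : δ < (1 - a) ^ m) :
    ∃ p, a < p ∧ p < 1 ∧ δ < (1 - p) ^ m := by
  have hcont : Tendsto (fun p : ℝ => (1 - p) ^ m) (𝓝[>] a) (𝓝 ((1 - a) ^ m)) :=
    ((continuous_const.sub continuous_id).pow m).continuousAt.continuousWithinAt
  have hnear : ∀ᶠ p in 𝓝[>] a, p < 1 ∧ δ < (1 - p) ^ m :=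
    ((eventually_lt_nhds ha).filter_mono nhdsWithin_le_nhds).and
      (hcont.eventually (eventually_gt_nhds hδ))
  obtain ⟨p, ⟨hp₁, hδp⟩, hap⟩ := (hnear.and self_mem_nhdsWithin).exists
  exact ⟨p, hap, hp₁, hδp⟩

theorem exists_nat_pos_div_lt {b c : ℝ} (hb : 0 ≤ b) (hc : 0 < c) :
    ∃ k : ℕ, 0 < k ∧ b / k < c := by
  obtain ⟨k, hk⟩ := exists_nat_gt (b / c)
  have hk0 : (0 : ℝ) < k := (div_nonneg hb hc.le).trans_lt hk
  exact ⟨k, Nat.cast_pos.1 hk0, (div_lt_iff₀ hk0).2 (by rwa [div_lt_iff₀ hc, mul_comm] at hk)⟩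

theorem le_iff_eq_of_forall_ne_lt {ι α : Type*} [LinearOrder α] {f : ι → α} {c : α} {i₀ : ι}
    (h₀ : c ≤ f i₀) (h : ∀ i, i ≠ i₀ → f i < c) (i : ι) : c ≤ f i ↔ i = i₀ := by
  constructor
  · exact fun hi => by_contra fun hne => (h i hne).not_ge hi
  · rintro rfl
    exact h₀

section spike

noncomputable def spikePmf (p : ℝ) (k : ℕ) : Fin (k + 1) → ℝ :=
  fun q => if q = 0 then p else (1 - p) / k

variable {p : ℝ} {k : ℕ}

@[simp]
theorem spikePmf_zero : spikePmf p k 0 = p := if_pos rfl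

theorem spikePmf_of_ne_zero {q : Fin (k + 1)} (hq : q ≠ 0) : spikePmf p k q = (1 - p) / k :=
  if_neg hq

theorem spikePmf_nonneg (hp₀ : 0 ≤ p) (hp₁ : p ≤ 1) (q : Fin (k + 1)) : 0 ≤ spikePmf p k q := by
  unfold spikePmf
  split_ifs
  · exact hp₀
  · exact div_nonneg (sub_nonneg.2 hp₁) k.cast_nonneg

theorem sum_spikePmf (hk : k ≠ 0) : ∑ q, spikePmf p k q = 1 := by
  rw [Fin.sum_univ_succ, spikePmf_zero]
  simp only [spikePmf_of_ne_zero (Fin.succ_ne_zero _), sum_const, card_univ, Fintype.card_fin,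
    nsmul_eq_mul]
  field_simp
  ring

end spike

theorem sup'_univ_eq_of_forall_le {ι α : Type*} [Fintype ι] [SemilatticeSup α] {f : ι → α}
    {i₀ : ι} (h : ∀ i, f i ≤ f i₀) (H : (univ : Finset ι).Nonempty) : univ.sup' H f = f i₀ :=
  le_antisymm (sup'_le H f fun i _ => h i) (le_sup' f (mem_univ i₀))

theorem stmt14_general (ε phat : ℝ) (hε : ε ∈ Set.Ioo (0 : ℝ) 1)
    (hphat : phat ∈ Set.Ioo (0 : ℝ) 1)
    (hfeas : phat / (1 - ε) < 1) (M : ℕ)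
    (δ' : ℝ) (hδ' : δ' < (1 - phat / (1 - ε)) ^ M) :
    ∃ (n : ℕ) (hn : 0 < n) (P : Fin n → ℝ) (pstar : ℝ),
      (∀ q, 0 ≤ P q) ∧ ∑ q, P q = 1 ∧
      pstar = Finset.univ.sup' ⟨⟨0, hn⟩, Finset.mem_univ _⟩ P ∧
      phat / (1 - ε) < pstar ∧
      (∃ q₀ : Fin n, ∀ q : Fin n, (pstar * (1 - ε) ≤ P q ↔ q = q₀)) ∧
      δ' < iidProb P M {x | ∀ i, ¬ pstar * (1 - ε) ≤ P (x i)} := by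
  obtain ⟨hε₀, hε₁⟩ := hε
  have ha : 0 < phat / (1 - ε) := div_pos hphat.1 (sub_pos.2 hε₁)
  obtain ⟨p, hap, hp₁, hδp⟩ := exists_gt_lt_one_sub_pow hfeas hδ'
  have hp₀ : 0 < p := ha.trans hap
  have hcp : p * (1 - ε) ≤ p := mul_le_of_le_one_right hp₀.le (by linarith)
  obtain ⟨k, hk, hsmall⟩ :=
    exists_nat_pos_div_lt (sub_nonneg.2 hp₁.le) (mul_pos hp₀ (sub_pos.2 hε₁))
  have hlevel : ∀ q, p * (1 - ε) ≤ spikePmf p k q ↔ q = 0 :=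
    le_iff_eq_of_forall_ne_lt (by rwa [spikePmf_zero])
      fun q hq => (spikePmf_of_ne_zero hq).trans_lt hsmall
  have hmax : ∀ q, spikePmf p k q ≤ spikePmf p k 0 := fun q => by
    rw [spikePmf_zero]
    by_cases hq : q = 0
    · rw [hq, spikePmf_zero]
    · exact ((spikePmf_of_ne_zero hq).trans_lt hsmall).le.trans hcp
  have hsum := sum_spikePmf (p := p) hk.ne'
  refine ⟨k + 1, k.succ_pos, spikePmf p k, p, spikePmf_nonneg hp₀.le hp₁.le, hsum,
    (sup'_univ_eq_of_forall_le hmax _).symm, hap, ⟨0, hlevel⟩, ?_⟩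
  simp only [hlevel, ← ne_eq]
  rwa [iidProb_forall_ne hsum, spikePmf_zero]

/-- optimality of the budget-PAC-MAP confidence. For any
`δ' < (1 - p̂/(1-ε))^M` there is a finite nonempty type (represented as `Fin n`,
`n > 0`) and a pmf `P` on it with MAP probability `p* > p̂/(1-ε)`, singleton
ε-superlevel set, such that the probability of missing the ε-superlevel set
in `M` i.i.d. draws exceeds `δ'`. -/
theorem stmt14 (ε phat : ℝ) (hε : ε ∈ Set.Ioo (0 : ℝ) 1)
    (hphat : phat ∈ Set.Ioo (0 : ℝ) 1)
    (hfeas : phat / (1 - ε) < 1) (M : ℕ) (hM : 1 ≤ M)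
    (δ' : ℝ) (hδ'0 : 0 ≤ δ') (hδ' : δ' < (1 - phat / (1 - ε)) ^ M) :
    ∃ (n : ℕ) (hn : 0 < n) (P : Fin n → ℝ) (pstar : ℝ),
      (∀ q, 0 ≤ P q) ∧ ∑ q, P q = 1 ∧
      pstar = Finset.univ.sup' ⟨⟨0, hn⟩, Finset.mem_univ _⟩ P ∧
      phat / (1 - ε) < pstar ∧
      (∃ q₀ : Fin n, ∀ q : Fin n, (pstar * (1 - ε) ≤ P q ↔ q = q₀)) ∧
      δ' < iidProb P M {x | ∀ i, ¬ pstar * (1 - ε) ≤ P (x i)} :=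
  stmt14_general ε phat hε hphat hfeas M δ' hδ'
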